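/- For α ∈ (0,1), ρ ∈ (0,1], fixed times 0 = t₀ < t₁ < ⋯ < t_n, and A(η₁,…,η₂) as above with n = 2, the function Φ(η₁,η₂) = Γ(ρ, A(η₁,η₂))/Γ(ρ) is completely monotone in (η₁,η₂), i.e. (−1)^{k₁+k₂} ∂^{k₁+k₂}Φ/∂η₁^{k₁}∂η₂^{k₂} ≥ 0 for all k₁,k₂ ≥ 0. -/

import Mathlib

/-!
Write `Φ = g ∘ A` with `g = Γ(ρ, ·) / Γ(ρ)` and `A(x, y) = a (x + y) + c y`, `a u = u ^ α t₁`,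
`c y = y ^ α (t₂ - t₁)`. The function `g` is completely monotone, since `g'` is
`-e^{-u} u^{ρ-1} / Γ(ρ)`, and `a`, `c` are Bernstein functions. Faà di Bruno in `x` gives
`∂ₓⁱ Φ = ∑ₘ g⁽ᵐ⁾ (A) Qᵢₘ (x + y)`, where the coefficients `Qᵢₘ` are built from the derivatives of
the completely monotone `a'` and have sign `(-1) ^ (i + m)`. As a function of `y`, `g⁽ᵐ⁾ ∘ A` has
sign `(-1) ^ m` (a completely monotone function composed with a Bernstein function), so by
Leibniz `y ↦ ∂ₓⁱ Φ` is `(-1) ^ i` times a completely monotone function.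
-/

open MeasureTheory Real

/-- The upper incomplete gamma function `Γ(ρ, x) = ∫_x^∞ e^{-w} w^{ρ-1} dw`. -/
noncomputable def uGamma (ρ x : ℝ) : ℝ := ∫ w in Set.Ioi x, Real.exp (-w) * w ^ (ρ - 1)

open Set Filter Topology
open scoped ContDiff

theorem neg_one_pow_mul_iteratedDeriv_mul_nonneg {f g : ℝ → ℝ} {x : ℝ} {n σ τ : ℕ}
    (hf : ContDiffAt ℝ n f x) (hg : ContDiffAt ℝ n g x)
    (hfs : ∀ k ≤ n, 0 ≤ (-1 : ℝ) ^ (k + σ) * iteratedDeriv k f x)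
    (hgs : ∀ k ≤ n, 0 ≤ (-1 : ℝ) ^ (k + τ) * iteratedDeriv k g x) :
    0 ≤ (-1 : ℝ) ^ (n + (σ + τ)) * iteratedDeriv n (fun y => f y * g y) x := by
  rw [iteratedDeriv_fun_mul hf hg, Finset.mul_sum]
  refine Finset.sum_nonneg fun k hk => ?_
  have hkn : k ≤ n := Nat.lt_succ_iff.mp (Finset.mem_range.mp hk)
  calc 0 ≤ (n.choose k : ℝ) * (((-1) ^ (k + σ) * iteratedDeriv k f x) *
        ((-1) ^ (n - k + τ) * iteratedDeriv (n - k) g x)) :=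
        mul_nonneg (Nat.cast_nonneg _) (mul_nonneg (hfs k hkn) (hgs (n - k) (Nat.sub_le n k)))
    _ = _ := by rw [show n + (σ + τ) = (k + σ) + (n - k + τ) by omega, pow_add]; ring

theorem ascPochhammer_eval_nonneg {S : Type*} [Semiring S] [PartialOrder S] [IsOrderedRing S]
    {s : S} (hs : 0 ≤ s) (n : ℕ) : 0 ≤ (ascPochhammer S n).eval s := by
  induction n with
  | zero => simp
  | succ n ih => rw [ascPochhammer_succ_eval]; exact mul_nonneg ih (by positivity)

theorem ContDiffOn.hasDerivAt_deriv {f : ℝ → ℝ} {s : Set ℝ} (hf : ContDiffOn ℝ ∞ f s)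
    (hs : IsOpen s) {x : ℝ} (hx : x ∈ s) : HasDerivAt f (deriv f x) x :=
  ((hf.contDiffAt (hs.mem_nhds hx)).differentiableAt (by simp)).hasDerivAt

theorem ContDiffOn.iteratedDeriv_of_isOpen {f : ℝ → ℝ} {s : Set ℝ} (hf : ContDiffOn ℝ ∞ f s)
    (hs : IsOpen s) (m : ℕ) : ContDiffOn ℝ ∞ (iteratedDeriv m f) s := by
  induction m with
  | zero => simpa using hf
  | succ m ih => rw [iteratedDeriv_succ]; exact ih.deriv_of_isOpen hs (by exact_mod_cast le_top)

theorem ContDiffOn.comp_const_add_Ioi {f : ℝ → ℝ} {n : WithTop ℕ∞}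
    (hf : ContDiffOn ℝ n f (Ioi 0)) {c : ℝ} (hc : 0 ≤ c) :
    ContDiffOn ℝ n (fun x => f (c + x)) (Ioi 0) :=
  hf.comp (contDiffOn_const.add contDiffOn_id) fun x (hx : 0 < x) => show 0 < c + x by positivity

/-- `SignedCM σ f`: the function `(-1) ^ σ • f` is smooth and completely monotone on `(0, ∞)`. -/
def SignedCM (σ : ℕ) (f : ℝ → ℝ) : Prop :=
  ContDiffOn ℝ ∞ f (Ioi 0) ∧ ∀ n : ℕ, ∀ x > 0, 0 ≤ (-1 : ℝ) ^ (n + σ) * iteratedDeriv n f x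

namespace SignedCM

variable {σ τ : ℕ} {f g : ℝ → ℝ}

theorem contDiffAt (hf : SignedCM σ f) {x : ℝ} (hx : 0 < x) {n : ℕ} : ContDiffAt ℝ n f x :=
  (hf.1.contDiffAt (Ioi_mem_nhds hx)).of_le (by exact_mod_cast le_top)

theorem of_modEq (hf : SignedCM σ f) (h : σ ≡ τ [MOD 2]) : SignedCM τ f := by
  refine ⟨hf.1, fun n x hx => ?_⟩
  rw [neg_one_pow_eq_pow_mod_two, Nat.add_mod, ← h, ← Nat.add_mod, ← neg_one_pow_eq_pow_mod_two]
  exact hf.2 n x hx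

theorem congr (hf : SignedCM σ f) (h : EqOn f g (Ioi 0)) : SignedCM σ g :=
  ⟨hf.1.congr h.symm, fun n x hx => h.iteratedDeriv_of_isOpen isOpen_Ioi n hx ▸ hf.2 n x hx⟩

theorem zero : SignedCM σ fun _ => 0 := ⟨contDiffOn_const, by simp⟩

theorem const {c : ℝ} (hc : 0 ≤ c) : SignedCM 0 fun _ => c := by
  refine ⟨contDiffOn_const, ?_⟩
  rintro (_ | _) x - <;> simp [iteratedDeriv_const, hc]

theorem add (hf : SignedCM σ f) (hg : SignedCM σ g) : SignedCM σ fun x => f x + g x := by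
  refine ⟨hf.1.add hg.1, fun n x hx => ?_⟩
  rw [iteratedDeriv_fun_add (hf.contDiffAt hx) (hg.contDiffAt hx), mul_add]
  exact add_nonneg (hf.2 n x hx) (hg.2 n x hx)

theorem sum {ι : Type*} (s : Finset ι) {f : ι → ℝ → ℝ} (hf : ∀ i ∈ s, SignedCM σ (f i)) :
    SignedCM σ fun x => ∑ i ∈ s, f i x := by
  classical
  induction s using Finset.induction_on with
  | empty => simpa using zero
  | insert i s hi ih =>
    simp only [Finset.sum_insert hi]
    exact (hf i (s.mem_insert_self i)).add (ih fun j hj => hf j (Finset.mem_insert_of_mem hj))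

theorem neg (hf : SignedCM σ f) : SignedCM (σ + 1) fun x => -f x := by
  refine ⟨hf.1.neg, fun n x hx => ?_⟩
  rw [iteratedDeriv_fun_neg, ← add_assoc, pow_succ]
  simpa using hf.2 n x hx

theorem mul (hf : SignedCM σ f) (hg : SignedCM τ g) : SignedCM (σ + τ) fun x => f x * g x :=
  ⟨hf.1.mul hg.1, fun _ x hx => neg_one_pow_mul_iteratedDeriv_mul_nonneg (hf.contDiffAt hx)
    (hg.contDiffAt hx) (fun k _ => hf.2 k x hx) (fun k _ => hg.2 k x hx)⟩

theorem mul_const (hf : SignedCM σ f) {c : ℝ} (hc : 0 ≤ c) : SignedCM σ fun x => f x * c :=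
  hf.mul (const hc)

theorem deriv (hf : SignedCM σ f) : SignedCM (σ + 1) (deriv f) := by
  refine ⟨hf.1.deriv_of_isOpen isOpen_Ioi (by exact_mod_cast le_top), fun n x hx => ?_⟩
  rw [← iteratedDeriv_succ', ← add_assoc, add_right_comm]
  exact hf.2 (n + 1) x hx

theorem iteratedDeriv (hf : SignedCM σ f) (m : ℕ) : SignedCM (σ + m) (iteratedDeriv m f) := by
  induction m with
  | zero => simpa using hf
  | succ m ih => rw [iteratedDeriv_succ]; exact ih.deriv

theorem of_deriv (hf : DifferentiableOn ℝ f (Ioi 0)) (hf₀ : ∀ x > 0, 0 ≤ (-1 : ℝ) ^ σ * f x)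
    (hf' : SignedCM (σ + 1) (_root_.deriv f)) : SignedCM σ f := by
  refine ⟨(contDiffOn_infty_iff_deriv_of_isOpen isOpen_Ioi).2 ⟨hf, hf'.1⟩, ?_⟩
  rintro (_ | n) x hx
  · simpa using hf₀ x hx
  · rw [iteratedDeriv_succ', add_right_comm, add_assoc]
    exact hf'.2 n x hx

theorem comp_const_add (hf : SignedCM σ f) {c : ℝ} (hc : 0 ≤ c) :
    SignedCM σ fun x => f (c + x) := by
  refine ⟨hf.1.comp_const_add_Ioi hc, fun n x hx => ?_⟩
  rw [iteratedDeriv_comp_const_add]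
  exact hf.2 n (c + x) (by positivity)

theorem exp_neg : SignedCM 0 fun x => Real.exp (-x) := by
  refine ⟨(Real.contDiff_exp.comp contDiff_neg).contDiffOn, fun n x _ => ?_⟩
  rw [iteratedDeriv_comp_neg, iteratedDeriv_eq_iterate, Real.iter_deriv_exp, smul_eq_mul,
    add_zero, ← mul_assoc, ← mul_pow]
  norm_num [Real.exp_nonneg]

theorem rpow_const {β : ℝ} (hβ : β ≤ 0) : SignedCM 0 fun x => x ^ β := by
  refine ⟨fun x hx => (Real.contDiffAt_rpow_const_of_ne (ne_of_gt hx)).contDiffWithinAt,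
    fun n x hx => ?_⟩
  rw [iteratedDeriv_eq_iterate, Real.iter_deriv_rpow_const, add_zero, ← mul_assoc,
    ← ascPochhammer_eval_neg_eq_descPochhammer]
  exact mul_nonneg (ascPochhammer_eval_nonneg (neg_nonneg.2 hβ) n) (Real.rpow_nonneg hx.le _)

end SignedCM

def IsBernstein (f : ℝ → ℝ) : Prop :=
  ContDiffOn ℝ ∞ f (Ioi 0) ∧ (∀ x > 0, 0 ≤ f x) ∧ SignedCM 0 (deriv f)

namespace IsBernstein

variable {f g : ℝ → ℝ}

theorem add (hf : IsBernstein f) (hg : IsBernstein g) : IsBernstein fun x => f x + g x :=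
  ⟨hf.1.add hg.1, fun x hx => add_nonneg (hf.2.1 x hx) (hg.2.1 x hx),
    (hf.2.2.add hg.2.2).congr fun _ hx =>
      ((hf.1.hasDerivAt_deriv isOpen_Ioi hx).add (hg.1.hasDerivAt_deriv isOpen_Ioi hx)).deriv.symm⟩

theorem mul_const (hf : IsBernstein f) {c : ℝ} (hc : 0 ≤ c) : IsBernstein fun x => f x * c :=
  ⟨hf.1.mul contDiffOn_const, fun x hx => mul_nonneg (hf.2.1 x hx) hc,
    by simpa only [deriv_mul_const_field'] using hf.2.2.mul_const hc⟩

theorem comp_const_add (hf : IsBernstein f) {c : ℝ} (hc : 0 ≤ c) :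
    IsBernstein fun x => f (c + x) :=
  ⟨hf.1.comp_const_add_Ioi hc, fun x hx => hf.2.1 _ (by positivity), by
    simpa only [funext fun x => deriv_comp_const_add (f := f) (a := c) (x := x)] using
      hf.2.2.comp_const_add hc⟩

end IsBernstein

theorem isBernstein_rpow_const {β : ℝ} (h₀ : 0 ≤ β) (h₁ : β ≤ 1) : IsBernstein fun x => x ^ β :=
  ⟨fun x hx => (Real.contDiffAt_rpow_const_of_ne (ne_of_gt hx)).contDiffWithinAt,
    fun x hx => Real.rpow_nonneg (le_of_lt hx) β,
    by simpa only [Real.deriv_rpow_const'] using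
      (SignedCM.const h₀).mul (SignedCM.rpow_const (by linarith : β - 1 ≤ 0))⟩

theorem SignedCM.comp {σ : ℕ} {g f : ℝ → ℝ} (hg : SignedCM σ g) (hf : IsBernstein f)
    (hf_pos : ∀ x > 0, 0 < f x) : SignedCM σ fun x => g (f x) := by
  have hmaps : MapsTo f (Ioi 0) (Ioi 0) := hf_pos
  refine ⟨hg.1.comp hf.1 hmaps, fun n => ?_⟩
  -- `(g ∘ f)' = (g' ∘ f) f'` with `g'` of sign `σ + 1`: induct on the order, for all `σ` and `g`
  induction n using Nat.strong_induction_on generalizing σ g with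
  | _ n ih =>
    rcases n with _ | n
    · exact fun x hx => by simpa using hg.2 0 (f x) (hf_pos x hx)
    intro x hx
    have hchain : EqOn (_root_.deriv fun x => g (f x))
        (fun x => _root_.deriv g (f x) * _root_.deriv f x) (Ioi 0) :=
      fun y hy => (hg.1.hasDerivAt_deriv isOpen_Ioi (hf_pos y hy)).comp y
        (hf.1.hasDerivAt_deriv isOpen_Ioi hy) |>.deriv
    rw [iteratedDeriv_succ', hchain.iteratedDeriv_of_isOpen isOpen_Ioi n hx,
      show n + 1 + σ = n + (σ + 1 + 0) by omega]
    exact neg_one_pow_mul_iteratedDeriv_mul_nonneg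
      ((hg.deriv.1.comp hf.1 hmaps).contDiffAt (Ioi_mem_nhds hx)
        |>.of_le (by exact_mod_cast le_top))
      (hf.2.2.contDiffAt hx)
      (fun k hk => ih k (by omega) hg.deriv x hx)
      (fun k _ => hf.2.2.2 k x hx)

/-- `faaDiBrunoCoeff a' i m` is the coefficient of `g⁽ᵐ⁾ ∘ a` in `(g ∘ a)⁽ⁱ⁾`; the recursion
comes from differentiating `g⁽ᵐ⁾ ∘ a · faaDiBrunoCoeff a' i m` by the product rule. -/
noncomputable def faaDiBrunoCoeff (P : ℝ → ℝ) : ℕ → ℕ → ℝ → ℝ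
  | 0, 0 => fun _ => 1
  | 0, _ + 1 => fun _ => 0
  | i + 1, 0 => deriv (faaDiBrunoCoeff P i 0)
  | i + 1, m + 1 => fun u =>
      deriv (faaDiBrunoCoeff P i (m + 1)) u + faaDiBrunoCoeff P i m u * P u

theorem faaDiBrunoCoeff_of_lt (P : ℝ → ℝ) {i m : ℕ} (h : i < m) :
    faaDiBrunoCoeff P i m = fun _ => 0 := by
  induction i generalizing m with
  | zero => obtain ⟨m, rfl⟩ := Nat.exists_eq_succ_of_ne_zero h.ne'; rfl
  | succ i ih =>
    obtain ⟨m, rfl⟩ := Nat.exists_eq_succ_of_ne_zero (by omega : m ≠ 0)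
    simp only [faaDiBrunoCoeff, ih (by omega : i < m + 1), ih (by omega : i < m)]
    simp

theorem contDiffOn_faaDiBrunoCoeff {P : ℝ → ℝ} {t : Set ℝ} (ht : IsOpen t)
    (hP : ContDiffOn ℝ ∞ P t) (i m : ℕ) : ContDiffOn ℝ ∞ (faaDiBrunoCoeff P i m) t := by
  induction i generalizing m with
  | zero => rcases m with _ | _ <;> exact contDiffOn_const
  | succ i ih =>
    have hd : ∀ m, ContDiffOn ℝ ∞ (deriv (faaDiBrunoCoeff P i m)) t := fun m =>
      (ih m).deriv_of_isOpen ht (by exact_mod_cast le_top)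
    rcases m with _ | m
    · exact hd 0
    · exact (hd (m + 1)).add ((ih m).mul hP)

theorem SignedCM.faaDiBrunoCoeff {P : ℝ → ℝ} (hP : SignedCM 0 P) (i m : ℕ) :
    SignedCM (i + m) (faaDiBrunoCoeff P i m) := by
  induction i generalizing m with
  | zero =>
    rcases m with _ | _
    · exact const zero_le_one
    · exact zero
  | succ i ih =>
    rcases m with _ | m
    · exact (ih 0).deriv
    · exact ((ih (m + 1)).deriv.of_modEq (by simp [Nat.ModEq]; omega)).add
        (((ih m).mul hP).of_modEq (by simp [Nat.ModEq]; omega))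

theorem iteratedDeriv_comp_eq_sum_faaDiBrunoCoeff {g a : ℝ → ℝ} {s t : Set ℝ} (hs : IsOpen s)
    (ht : IsOpen t) (hg : ContDiffOn ℝ ∞ g s) (ha : ContDiffOn ℝ ∞ a t) (hst : MapsTo a t s)
    (i : ℕ) {x : ℝ} (hx : x ∈ t) :
    iteratedDeriv i (fun x => g (a x)) x =
      ∑ m ∈ Finset.range (i + 1), iteratedDeriv m g (a x) * faaDiBrunoCoeff (deriv a) i m x := by
  have hQ := contDiffOn_faaDiBrunoCoeff ht (ha.deriv_of_isOpen ht (by exact_mod_cast le_top))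
  induction i generalizing x with
  | zero => simp [faaDiBrunoCoeff]
  | succ i ih =>
    have hterm : ∀ m ∈ Finset.range (i + 1), HasDerivAt
        (fun x => iteratedDeriv m g (a x) * faaDiBrunoCoeff (deriv a) i m x)
        (iteratedDeriv m g (a x) * deriv (faaDiBrunoCoeff (deriv a) i m) x +
          iteratedDeriv (m + 1) g (a x) * (faaDiBrunoCoeff (deriv a) i m x * deriv a x)) x :=
      fun m _ => by
        rw [iteratedDeriv_succ]
        refine (((hg.iteratedDeriv_of_isOpen hs m).hasDerivAt_deriv hs (hst hx)).comp x
          (ha.hasDerivAt_deriv ht hx)).mul ((hQ i m).hasDerivAt_deriv ht hx) |>.congr_deriv ?_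
        rw [Function.comp_apply]; ring
    have hev : iteratedDeriv i (fun x => g (a x)) =ᶠ[𝓝 x] fun y => ∑ m ∈ Finset.range (i + 1),
        iteratedDeriv m g (a y) * faaDiBrunoCoeff (deriv a) i m y :=
      eventually_of_mem (ht.mem_nhds hx) fun y hy => ih hy
    have htop : deriv (faaDiBrunoCoeff (deriv a) i (i + 1)) x = 0 := by
      rw [faaDiBrunoCoeff_of_lt _ (Nat.lt_succ_self i)]; simp
    rw [iteratedDeriv_succ, hev.deriv_eq, (HasDerivAt.fun_sum hterm).deriv,
      Finset.sum_range_succ' _ (i + 1)]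
    simp only [faaDiBrunoCoeff, mul_add, Finset.sum_add_distrib]
    rw [Finset.sum_range_succ' (fun m => iteratedDeriv m g (a x) *
        deriv (faaDiBrunoCoeff (deriv a) i m) x),
      Finset.sum_range_succ (fun m => iteratedDeriv (m + 1) g (a x) *
        deriv (faaDiBrunoCoeff (deriv a) i (m + 1)) x), htop]
    ring

theorem uGamma_eq_Gamma_sub {ρ x : ℝ} (hρ : 0 < ρ) (hx : 0 ≤ x) :
    uGamma ρ x = Real.Gamma ρ - ∫ w in (0 : ℝ)..x, Real.exp (-w) * w ^ (ρ - 1) := by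
  rw [Real.Gamma_eq_integral hρ, ← intervalIntegral.integral_Ioi_sub_Ioi
    (Real.GammaIntegral_convergent hρ) hx, uGamma, sub_sub_cancel]

theorem hasDerivAt_uGamma {ρ x : ℝ} (hρ : 0 < ρ) (hx : 0 < x) :
    HasDerivAt (uGamma ρ) (-(Real.exp (-x) * x ^ (ρ - 1))) x := by
  have hcont : ContinuousOn (fun w : ℝ => Real.exp (-w) * w ^ (ρ - 1)) (Ioi 0) :=
    (Real.continuous_exp.comp continuous_neg).continuousOn.mul
      fun w hw => (Real.continuousAt_rpow_const w _ (Or.inl (ne_of_gt hw))).continuousWithinAt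
  have hint : IntervalIntegrable (fun w : ℝ => Real.exp (-w) * w ^ (ρ - 1)) volume 0 x :=
    (intervalIntegrable_iff_integrableOn_Ioc_of_le hx.le).2
      ((Real.GammaIntegral_convergent hρ).mono_set Ioc_subset_Ioi_self)
  have hev : uGamma ρ =ᶠ[𝓝 x]
      fun u => Real.Gamma ρ - ∫ w in (0 : ℝ)..u, Real.exp (-w) * w ^ (ρ - 1) :=
    eventually_of_mem (Ioi_mem_nhds hx) fun u hu => uGamma_eq_Gamma_sub hρ (le_of_lt hu)
  refine HasDerivAt.congr_of_eventuallyEq ?_ hev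
  exact (intervalIntegral.integral_hasDerivAt_right hint
    (hcont.stronglyMeasurableAtFilter isOpen_Ioi x hx)
    (hcont.continuousAt (Ioi_mem_nhds hx))).const_sub _

theorem signedCM_uGamma {ρ : ℝ} (h₀ : 0 < ρ) (h₁ : ρ ≤ 1) : SignedCM 0 (uGamma ρ) :=
  SignedCM.of_deriv (fun x hx => (hasDerivAt_uGamma h₀ hx).differentiableAt.differentiableWithinAt)
    (fun x hx => by
      simpa [uGamma] using setIntegral_nonneg measurableSet_Ioi fun w (hw : x < w) =>
        mul_nonneg (Real.exp_nonneg _) (Real.rpow_nonneg (hx.trans hw).le _))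
    ((SignedCM.exp_neg.mul (SignedCM.rpow_const (by linarith : ρ - 1 ≤ 0))).neg.congr
      fun x hx => (hasDerivAt_uGamma h₀ hx).deriv.symm)

theorem signedCM_iteratedDeriv_comp_add {g a c : ℝ → ℝ} (hg : SignedCM 0 g) (ha : IsBernstein a)
    (ha_pos : ∀ u > 0, 0 < a u) (hc : IsBernstein c) (i : ℕ) {η : ℝ} (hη : 0 < η) :
    SignedCM i fun y => iteratedDeriv i (fun x => g (a (x + y) + c y)) η := by
  set B : ℝ → ℝ := fun y => a (η + y) + c y
  have hB : IsBernstein B := (ha.comp_const_add hη.le).add hc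
  have hB_pos : ∀ y > 0, 0 < B y := fun y hy =>
    add_pos_of_pos_of_nonneg (ha_pos _ (by positivity)) (hc.2.1 y hy)
  have hterm : ∀ m ∈ Finset.range (i + 1), SignedCM i fun y =>
      iteratedDeriv m g (B y) * faaDiBrunoCoeff (deriv a) i m (η + y) := fun m _ =>
    (((hg.iteratedDeriv m).comp hB hB_pos).mul
      ((SignedCM.faaDiBrunoCoeff ha.2.2 i m).comp_const_add hη.le)).of_modEq
      (by simp [Nat.ModEq]; omega)
  refine (SignedCM.sum _ hterm).congr fun y (hy : 0 < y) => Eq.symm ?_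
  have hmaps : MapsTo (fun u => a u + c y) (Ioi 0) (Ioi 0) := fun u hu =>
    add_pos_of_pos_of_nonneg (ha_pos u hu) (hc.2.1 y hy)
  calc iteratedDeriv i (fun x => g (a (x + y) + c y)) η
      = iteratedDeriv i (fun u => g (a u + c y)) (η + y) :=
        congrFun (iteratedDeriv_comp_add_const i (fun u => g (a u + c y)) y) η
    _ = _ := by
        rw [iteratedDeriv_comp_eq_sum_faaDiBrunoCoeff isOpen_Ioi isOpen_Ioi hg.1
          (ha.1.add contDiffOn_const) hmaps i (show 0 < η + y by positivity), deriv_add_const']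

theorem bivariate_laplace_transform_completely_monotone
    (α ρ t₁ t₂ : ℝ) (hα : α ∈ Set.Ioo (0 : ℝ) 1) (hρ : ρ ∈ Set.Ioc (0 : ℝ) 1)
    (ht₁ : 0 < t₁) (ht₁₂ : t₁ < t₂) :
    ∀ (k₁ k₂ : ℕ) (η₁ η₂ : ℝ), 0 < η₁ → 0 < η₂ →
      0 ≤ (-1 : ℝ) ^ (k₁ + k₂) *
        iteratedDeriv k₂
          (fun y => iteratedDeriv k₁
            (fun x => uGamma ρ ((x + y) ^ α * t₁ + y ^ α * (t₂ - t₁)) / Real.Gamma ρ) η₁) η₂ := by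
  intro k₁ k₂ η₁ η₂ h₁ h₂
  have hg : SignedCM 0 fun u => uGamma ρ u / Real.Gamma ρ :=
    ((signedCM_uGamma hρ.1 hρ.2).mul_const (inv_nonneg.2 (Real.Gamma_pos_of_pos hρ.1).le)).congr
      fun u _ => (div_eq_mul_inv _ _).symm
  have hrpow : IsBernstein fun u => u ^ α := isBernstein_rpow_const hα.1.le hα.2.le
  have hΦ := signedCM_iteratedDeriv_comp_add hg (hrpow.mul_const ht₁.le)
    (fun u hu => by positivity) (hrpow.mul_const (sub_nonneg.2 ht₁₂.le)) k₁ h₁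
  rw [add_comm]
  exact hΦ.2 k₂ η₂ h₂
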